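/- Let y = (y_1,…,y_e) ∈ ℤ^e, write y_1 + y_2 + … + y_e = 𝔶·e + j₀ with 𝔶 ∈ ℤ and j₀ ∈ {0,…,e−1}, and let σ be the stable sorting permutation of y. For an integer x let x̄ denote the unique element of {1,…,e} congruent to x modulo e. The following statements are equivalent: (1) y_{σ(e)} ≤ y_{σ(1)} + 1 if σ(e) < σ(1), and y_{σ(e)} ≤ y_{σ(1)} otherwise; (2) for all j ∈ {1,…,e}, y_j = 𝔶 + 1 if j ≤ j₀ and y_j = 𝔶 otherwise; (3) for all j ∈ {1,…,e} with j ≠ j̄₀, y_{\overline{j+1}} = y_j + δ_{j,e}; (4) for all j ∈ {1,…,e}, y_{\overline{j+1}} ≤ y_j + δ_{j,e}; (5) y_{σ(e)} = y_{σ(1)} + 1 if σ(e) < σ(1), and y_{σ(e)} = y_{σ(1)} otherwise. -/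
import Mathlib

/-- `σ` is the stable sorting permutation of `y`: `y_{σ(j)} ≤ y_{σ(j+1)}` for all `j`,
with equality only if `σ(j) < σ(j+1)`.  (Such a permutation is unique.) -/
def IsStableSorting (e : ℕ) (y : Fin e → ℤ) (σ : Equiv.Perm (Fin e)) : Prop :=
  ∀ (j : ℕ) (hj : j + 1 < e),
    y (σ ⟨j, by omega⟩) ≤ y (σ ⟨j + 1, hj⟩) ∧
      (y (σ ⟨j, by omega⟩) = y (σ ⟨j + 1, hj⟩) → σ ⟨j, by omega⟩ < σ ⟨j + 1, hj⟩)

/-- The cyclically next index: `i ↦ i + 1 (mod e)`. -/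
def nextIdx {e : ℕ} (i : Fin e) : Fin e := ⟨((i : ℕ) + 1) % e, Nat.mod_lt _ i.pos⟩

namespace FlatAux

lemma nextIdx_val {e : ℕ} (i : Fin e) :
    (nextIdx i : ℕ) = if (i : ℕ) + 1 = e then 0 else (i : ℕ) + 1 := by
  have hi := i.isLt
  simp only [nextIdx]
  rcases eq_or_ne ((i : ℕ) + 1) e with h | h
  · rw [if_pos h, h, Nat.mod_self]
  · rw [if_neg h, Nat.mod_eq_of_lt (by omega)]

lemma nextIdx_bij {e : ℕ} : Function.Bijective (nextIdx (e := e)) := by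
  refine Finite.injective_iff_bijective.mp ?_
  intro a b hab
  have h := congrArg Fin.val hab
  rw [nextIdx_val, nextIdx_val] at h
  have ha := a.isLt; have hb := b.isLt
  apply Fin.ext
  split_ifs at h <;> omega

lemma sorted_le {e : ℕ} {y : Fin e → ℤ} {σ : Equiv.Perm (Fin e)}
    (hσ : IsStableSorting e y σ) :
    ∀ (b : ℕ) (hb : b < e) (a : ℕ) (ha : a ≤ b),
      y (σ ⟨a, Nat.lt_of_le_of_lt ha hb⟩) ≤ y (σ ⟨b, hb⟩) := by
  intro b
  induction b with
  | zero =>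
    intro hb a ha
    have h0 : a = 0 := by omega
    subst h0; exact le_refl _
  | succ n ih =>
    intro hb a ha
    rcases Nat.eq_or_lt_of_le ha with h | h
    · subst h; exact le_refl _
    · exact le_trans (ih (by omega) a (by omega)) (hσ n hb).1

lemma sorted_stable {e : ℕ} {y : Fin e → ℤ} {σ : Equiv.Perm (Fin e)}
    (hσ : IsStableSorting e y σ) :
    ∀ (b : ℕ) (hb : b < e) (a : ℕ) (ha : a < b),
      y (σ ⟨a, Nat.lt_trans ha hb⟩) = y (σ ⟨b, hb⟩) →
        σ ⟨a, Nat.lt_trans ha hb⟩ < σ ⟨b, hb⟩ := by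
  intro b
  induction b with
  | zero => intro hb a ha; omega
  | succ n ih =>
    intro hb a ha heq
    rcases Nat.lt_succ_iff_lt_or_eq.mp ha with h | h
    · have h1 : y (σ ⟨a, Nat.lt_trans ha hb⟩) ≤ y (σ ⟨n, by omega⟩) :=
        sorted_le hσ n (by omega) a (by omega)
      have h2 := (hσ n hb).1
      have heqn : y (σ ⟨a, Nat.lt_trans ha hb⟩) = y (σ ⟨n, by omega⟩) :=
        le_antisymm h1 (by linarith)
      exact lt_trans (ih (by omega) a h heqn) ((hσ n hb).2 (by linarith))
    · subst h; exact (hσ a hb).2 heq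

lemma sorted_min {e : ℕ} {y : Fin e → ℤ} {σ : Equiv.Perm (Fin e)}
    (hσ : IsStableSorting e y σ) (h0e : 0 < e) (i : Fin e) :
    y (σ ⟨0, h0e⟩) ≤ y i := by
  have h := sorted_le hσ ((σ.symm i) : ℕ) (σ.symm i).isLt 0 (Nat.zero_le _)
  have hmk : (⟨((σ.symm i) : ℕ), (σ.symm i).isLt⟩ : Fin e) = σ.symm i := rfl
  rwa [hmk, Equiv.apply_symm_apply] at h

lemma sorted_max {e : ℕ} {y : Fin e → ℤ} {σ : Equiv.Perm (Fin e)}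
    (hσ : IsStableSorting e y σ) (h1e : e - 1 < e) (i : Fin e) :
    y i ≤ y (σ ⟨e - 1, h1e⟩) := by
  have h := sorted_le hσ (e - 1) h1e ((σ.symm i) : ℕ)
    (by have := (σ.symm i).isLt; omega)
  have hmk : (⟨((σ.symm i) : ℕ), (σ.symm i).isLt⟩ : Fin e) = σ.symm i := rfl
  rwa [hmk, Equiv.apply_symm_apply] at h

lemma le_last {e : ℕ} {y : Fin e → ℤ} {σ : Equiv.Perm (Fin e)}
    (hσ : IsStableSorting e y σ) (h1e : e - 1 < e) (i : Fin e)
    (hi : y i = y (σ ⟨e - 1, h1e⟩)) : i ≤ σ ⟨e - 1, h1e⟩ := by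
  have h1 : ((σ.symm i) : ℕ) ≤ e - 1 := by have := (σ.symm i).isLt; omega
  rcases eq_or_lt_of_le h1 with h | h
  · have h2 : σ.symm i = (⟨e - 1, h1e⟩ : Fin e) := Fin.ext h
    rw [← h2, Equiv.apply_symm_apply]
  · have hmk : (⟨((σ.symm i) : ℕ), Nat.lt_trans h h1e⟩ : Fin e) = σ.symm i := rfl
    have hi' : y (σ ⟨((σ.symm i) : ℕ), Nat.lt_trans h h1e⟩) = y (σ ⟨e - 1, h1e⟩) := by
      rw [hmk, Equiv.apply_symm_apply]; exact hi
    have hs := sorted_stable hσ (e - 1) h1e ((σ.symm i) : ℕ) h hi'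
    rw [hmk, Equiv.apply_symm_apply] at hs
    exact le_of_lt hs

lemma first_le {e : ℕ} {y : Fin e → ℤ} {σ : Equiv.Perm (Fin e)}
    (hσ : IsStableSorting e y σ) (h0e : 0 < e) (i : Fin e)
    (hi : y i = y (σ ⟨0, h0e⟩)) : σ ⟨0, h0e⟩ ≤ i := by
  rcases Nat.eq_zero_or_pos ((σ.symm i) : ℕ) with h | h
  · have h2 : σ.symm i = (⟨0, h0e⟩ : Fin e) := Fin.ext h
    rw [← h2, Equiv.apply_symm_apply]
  · have hmk : (⟨((σ.symm i) : ℕ), (σ.symm i).isLt⟩ : Fin e) = σ.symm i := rfl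
    have hi' : y (σ ⟨0, Nat.lt_trans h (σ.symm i).isLt⟩) =
        y (σ ⟨((σ.symm i) : ℕ), (σ.symm i).isLt⟩) := by
      rw [hmk, Equiv.apply_symm_apply]
      exact hi.symm
    have hs := sorted_stable hσ ((σ.symm i) : ℕ) (σ.symm i).isLt 0 h hi'
    rw [hmk, Equiv.apply_symm_apply] at hs
    exact le_of_lt hs

lemma sum_ite_lt (n k : ℕ) : ∑ i ∈ Finset.range n, (if i < k then (1:ℤ) else 0) = min n k := by
  induction n with
  | zero => simp
  | succ m ih =>
    rw [Finset.sum_range_succ, ih]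
    split_ifs with h <;> omega

lemma eqaux (e : ℕ) (he : 1 ≤ e) (d : ℤ) (k j : ℕ) (hk : k < e) (hj : j < e)
    (h : (e : ℤ) * d = (j : ℤ) - (k : ℤ)) : d = 0 ∧ (k : ℤ) = j := by
  have h1 : (0:ℤ) ≤ (k:ℤ) := Int.natCast_nonneg k
  have h2 : (0:ℤ) ≤ (j:ℤ) := Int.natCast_nonneg j
  have h3 : (k:ℤ) < e := by exact_mod_cast hk
  have h4 : (j:ℤ) < e := by exact_mod_cast hj
  have h5 : (1:ℤ) ≤ e := by exact_mod_cast he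
  have hd : d = 0 := by
    by_contra hd
    rcases lt_or_gt_of_ne hd with hd' | hd'
    · have : (e:ℤ) * d ≤ (e:ℤ) * (-1) :=
        mul_le_mul_of_nonneg_left (by omega) (by omega)
      linarith
    · have : (e:ℤ) * 1 ≤ (e:ℤ) * d :=
        mul_le_mul_of_nonneg_left (by omega) (by omega)
      linarith
  refine ⟨hd, ?_⟩
  rw [hd, mul_zero] at h
  linarith

end FlatAux

namespace FlatAux

lemma imp12 {e : ℕ} (he : 1 ≤ e) (h0e : 0 < e) (h1e : e - 1 < e)
    {y : Fin e → ℤ} {𝔶 : ℤ} {j₀ : ℕ} (hj₀ : j₀ < e)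
    (hsum : ∑ i : Fin e, y i = 𝔶 * e + j₀)
    {σ : Equiv.Perm (Fin e)} (hσ : IsStableSorting e y σ)
    (h1 : y (σ ⟨e - 1, h1e⟩) ≤ y (σ ⟨0, h0e⟩) +
        (if σ ⟨e - 1, h1e⟩ < σ ⟨0, h0e⟩ then 1 else 0)) :
    ∀ i : Fin e, y i = 𝔶 + (if (i : ℕ) + 1 ≤ j₀ then 1 else 0) := by
  have hmin := sorted_min hσ h0e
  have hmax := sorted_max hσ h1e
  by_cases hlt : σ ⟨e - 1, h1e⟩ < σ ⟨0, h0e⟩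
  · rw [if_pos hlt] at h1
    have he2 : 2 ≤ e := by
      by_contra hc
      have h2 : (⟨e - 1, h1e⟩ : Fin e) = ⟨0, h0e⟩ :=
        Fin.ext (by show e - 1 = 0; omega)
      rw [h2] at hlt
      exact lt_irrefl _ hlt
    have hmm : y (σ ⟨0, h0e⟩) < y (σ ⟨e - 1, h1e⟩) := by
      rcases lt_or_eq_of_le (sorted_le hσ (e - 1) h1e 0 (Nat.zero_le _)) with h | h
      · exact h
      · exact absurd hlt (asymm (sorted_stable hσ (e - 1) h1e 0 (by omega) h))
    have hM : y (σ ⟨e - 1, h1e⟩) = y (σ ⟨0, h0e⟩) + 1 :=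
      le_antisymm h1 (Int.add_one_le_iff.mpr hmm)
    have ha : ∀ i : Fin e, y i = y (σ ⟨e - 1, h1e⟩) →
        (i : ℕ) < ((σ ⟨0, h0e⟩ : Fin e) : ℕ) :=
      fun i hi => Fin.lt_def.mp (lt_of_le_of_lt (le_last hσ h1e i hi) hlt)
    have hb : ∀ i : Fin e, y i = y (σ ⟨0, h0e⟩) →
        ((σ ⟨0, h0e⟩ : Fin e) : ℕ) ≤ (i : ℕ) :=
      fun i hi => Fin.le_def.mp (first_le hσ h0e i hi)
    have hvals : ∀ i : Fin e, y i = y (σ ⟨0, h0e⟩) +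
        (if (i : ℕ) < ((σ ⟨0, h0e⟩ : Fin e) : ℕ) then 1 else 0) := by
      intro i
      have h1' := hmin i
      have h2' := hmax i
      split_ifs with h
      · rcases eq_or_lt_of_le h1' with h' | h'
        · exact absurd (hb i h'.symm) (by omega)
        · omega
      · rcases eq_or_lt_of_le h2' with h' | h'
        · exact absurd (ha i h') (by omega)
        · omega
    have hs2 : (e : ℤ) * y (σ ⟨0, h0e⟩) + (((σ ⟨0, h0e⟩ : Fin e) : ℕ) : ℤ) =
        𝔶 * e + j₀ := by
      rw [← hsum, Finset.sum_congr rfl (fun i _ => hvals i), Finset.sum_add_distrib,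
        Finset.sum_const, Finset.card_univ, Fintype.card_fin, nsmul_eq_mul,
        Fin.sum_univ_eq_sum_range
          (fun j => if j < ((σ ⟨0, h0e⟩ : Fin e) : ℕ) then (1 : ℤ) else 0) e,
        sum_ite_lt, min_eq_right (le_of_lt (Fin.isLt _))]
    obtain ⟨hd, hkj⟩ := eqaux e he (y (σ ⟨0, h0e⟩) - 𝔶)
      ((σ ⟨0, h0e⟩ : Fin e) : ℕ) j₀ (Fin.isLt _) hj₀ (by linear_combination hs2)
    intro i
    rw [hvals i]
    have hm : y (σ ⟨0, h0e⟩) = 𝔶 := by linarith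
    have hkj' : ((σ ⟨0, h0e⟩ : Fin e) : ℕ) = j₀ := by exact_mod_cast hkj
    rw [hm, hkj']
    split_ifs <;> first | rfl | (exfalso; omega)
  · rw [if_neg hlt, add_zero] at h1
    have hall : ∀ i, y i = y (σ ⟨0, h0e⟩) :=
      fun i => le_antisymm (le_trans (hmax i) h1) (hmin i)
    have hs2 : (e : ℤ) * y (σ ⟨0, h0e⟩) = 𝔶 * e + j₀ := by
      rw [← hsum, Finset.sum_congr rfl (fun i _ => hall i), Finset.sum_const,
        Finset.card_univ, Fintype.card_fin, nsmul_eq_mul]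
    obtain ⟨hd, hj⟩ := eqaux e he (y (σ ⟨0, h0e⟩) - 𝔶) 0 j₀ (by omega) hj₀
      (by push_cast; linarith)
    have hj0 : j₀ = 0 := by exact_mod_cast hj.symm
    intro i
    rw [if_neg (by omega : ¬ ((i : ℕ) + 1 ≤ j₀)), add_zero, hall i]
    linarith

lemma imp23 {e : ℕ} (he : 1 ≤ e) {y : Fin e → ℤ} {𝔶 : ℤ} {j₀ : ℕ} (hj₀ : j₀ < e)
    (h2 : ∀ i : Fin e, y i = 𝔶 + (if (i : ℕ) + 1 ≤ j₀ then 1 else 0)) :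
    ∀ i : Fin e, (i : ℕ) + 1 ≠ (if j₀ = 0 then e else j₀) →
      y (nextIdx i) = y i + (if (i : ℕ) = e - 1 then 1 else 0) := by
  intro i hi
  have hiv := i.isLt
  rw [h2 (nextIdx i), h2 i, nextIdx_val i]
  split_ifs at hi ⊢ <;> first | ring1 | (exfalso; omega)

lemma imp34 {e : ℕ} (he : 1 ≤ e) {y : Fin e → ℤ} {𝔶 : ℤ} {j₀ : ℕ} (hj₀ : j₀ < e)
    (hsum : ∑ i : Fin e, y i = 𝔶 * e + j₀)
    (h3 : ∀ i : Fin e, (i : ℕ) + 1 ≠ (if j₀ = 0 then e else j₀) →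
      y (nextIdx i) = y i + (if (i : ℕ) = e - 1 then 1 else 0)) :
    ∀ i : Fin e, y (nextIdx i) ≤ y i + (if (i : ℕ) = e - 1 then 1 else 0) := by
  have hone : ∑ j : Fin e, (if (j : ℕ) = e - 1 then (1 : ℤ) else 0) = 1 := by
    rw [Fin.sum_univ_eq_sum_range (fun j => if j = e - 1 then (1 : ℤ) else 0) e,
      Finset.sum_ite_eq' (Finset.range e) (e - 1) (fun _ => (1 : ℤ)),
      if_pos (Finset.mem_range.mpr (by omega))]
  have hsumf : ∑ j : Fin e,
      (y (nextIdx j) - y j - (if (j : ℕ) = e - 1 then (1 : ℤ) else 0)) = -1 := by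
    rw [Finset.sum_sub_distrib, Finset.sum_sub_distrib,
      Function.Bijective.sum_comp nextIdx_bij y, hone]
    ring
  set t := if j₀ = 0 then e else j₀ with ht
  have ht1 : 1 ≤ t := by rw [ht]; split_ifs <;> omega
  have ht2 : t ≤ e := by rw [ht]; split_ifs <;> omega
  set istar : Fin e := ⟨t - 1, by omega⟩ with histar
  have hzero : ∀ j : Fin e, j ≠ istar →
      y (nextIdx j) - y j - (if (j : ℕ) = e - 1 then (1 : ℤ) else 0) = 0 := by
    intro j hj
    have hne : (j : ℕ) + 1 ≠ t := by
      intro hc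
      exact hj (Fin.ext (by show (j : ℕ) = (istar : ℕ); rw [histar]; show _ = t - 1; omega))
    rw [h3 j hne]
    ring
  have hstar : y (nextIdx istar) - y istar -
      (if (istar : ℕ) = e - 1 then (1 : ℤ) else 0) = -1 := by
    rw [← hsumf]
    exact (Finset.sum_eq_single _ (fun b _ hb => hzero b hb)
      (fun h => absurd (Finset.mem_univ _) h)).symm
  intro i
  by_cases hj : i = istar
  · subst hj
    linarith [hstar]
  · have h0 := hzero i hj
    linarith

lemma imp45 {e : ℕ} (he : 1 ≤ e) (h0e : 0 < e) (h1e : e - 1 < e)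
    {y : Fin e → ℤ} {σ : Equiv.Perm (Fin e)} (hσ : IsStableSorting e y σ)
    (h4 : ∀ i : Fin e, y (nextIdx i) ≤ y i + (if (i : ℕ) = e - 1 then 1 else 0)) :
    y (σ ⟨e - 1, h1e⟩) = y (σ ⟨0, h0e⟩) +
      (if σ ⟨e - 1, h1e⟩ < σ ⟨0, h0e⟩ then 1 else 0) := by
  have hdec : ∀ (b : ℕ) (hb : b < e) (a : ℕ) (ha : a ≤ b),
      y ⟨b, hb⟩ ≤ y ⟨a, Nat.lt_of_le_of_lt ha hb⟩ := by
    intro b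
    induction b with
    | zero =>
      intro hb a ha
      have h0 : a = 0 := by omega
      exact le_of_eq (congrArg y (Fin.ext (show (0:ℕ) = a by omega)))
    | succ n ih =>
      intro hb a ha
      have hn : n < e := by omega
      have hstep : y ⟨n + 1, hb⟩ ≤ y ⟨n, hn⟩ := by
        have hnv : nextIdx (⟨n, hn⟩ : Fin e) = (⟨n + 1, hb⟩ : Fin e) := by
          apply Fin.ext
          rw [nextIdx_val]
          show (if n + 1 = e then 0 else n + 1) = n + 1
          rw [if_neg (by omega)]
        have h : y (nextIdx (⟨n, hn⟩ : Fin e)) ≤ y ⟨n, hn⟩ +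
            (if n = e - 1 then 1 else 0) := h4 _
        rw [hnv, if_neg (show ¬ n = e - 1 by omega), add_zero] at h
        exact h
      rcases Nat.eq_or_lt_of_le ha with hh | hh
      · exact le_of_eq (congrArg y (Fin.ext (show n + 1 = a by omega)))
      · exact le_trans hstep (ih hn a (by omega))
  have hwrap : y ⟨0, h0e⟩ ≤ y ⟨e - 1, h1e⟩ + 1 := by
    have hnv : nextIdx (⟨e - 1, h1e⟩ : Fin e) = (⟨0, h0e⟩ : Fin e) := by
      apply Fin.ext
      rw [nextIdx_val]
      show (if (e - 1) + 1 = e then 0 else (e - 1) + 1) = 0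
      rw [if_pos (by omega)]
    have h : y (nextIdx (⟨e - 1, h1e⟩ : Fin e)) ≤ y ⟨e - 1, h1e⟩ +
        (if e - 1 = e - 1 then 1 else 0) := h4 _
    rw [hnv, if_pos rfl] at h
    exact h
  have hminy : ∀ i : Fin e, y ⟨e - 1, h1e⟩ ≤ y i := by
    intro i
    exact hdec (e - 1) h1e (i : ℕ) (by have := i.isLt; omega)
  have hmaxy : ∀ i : Fin e, y i ≤ y ⟨0, h0e⟩ := by
    intro i
    exact hdec (i : ℕ) i.isLt 0 (Nat.zero_le _)
  have hmin := sorted_min hσ h0e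
  have hmax := sorted_max hσ h1e
  have hmineq : y (σ ⟨0, h0e⟩) = y ⟨e - 1, h1e⟩ :=
    le_antisymm (hmin _) (hminy _)
  have hmaxeq : y (σ ⟨e - 1, h1e⟩) = y ⟨0, h0e⟩ :=
    le_antisymm (hmaxy _) (hmax _)
  have hle : y ⟨e - 1, h1e⟩ ≤ y ⟨0, h0e⟩ := hminy _
  rcases eq_or_lt_of_le hle with heq | hlt2
  · have hnlt : ¬ (σ ⟨e - 1, h1e⟩ < σ ⟨0, h0e⟩) := by
      intro hc
      rcases Nat.lt_or_ge 1 e with h2 | h2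
      · have hyeq : y (σ ⟨0, h0e⟩) = y (σ ⟨e - 1, h1e⟩) := by
          linarith [hmineq, hmaxeq, heq]
        have hstab := sorted_stable hσ (e - 1) h1e 0 (by omega) hyeq
        exact absurd hc (asymm hstab)
      · have h2' : (⟨e - 1, h1e⟩ : Fin e) = (⟨0, h0e⟩ : Fin e) :=
          Fin.ext (by show e - 1 = 0; omega)
        rw [h2'] at hc
        exact lt_irrefl _ hc
    rw [if_neg hnlt, add_zero]
    linarith [hmineq, hmaxeq, heq]
  · have hlt : σ ⟨e - 1, h1e⟩ < σ ⟨0, h0e⟩ := by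
      by_contra hc
      have hge : ((σ ⟨0, h0e⟩ : Fin e) : ℕ) ≤ ((σ ⟨e - 1, h1e⟩ : Fin e) : ℕ) :=
        Fin.le_def.mp (le_of_not_gt hc)
      have hd := hdec ((σ ⟨e - 1, h1e⟩ : Fin e) : ℕ) (Fin.isLt _)
        ((σ ⟨0, h0e⟩ : Fin e) : ℕ) hge
      have hd' : y (σ ⟨e - 1, h1e⟩) ≤ y (σ ⟨0, h0e⟩) := hd
      linarith [hmineq, hmaxeq, hlt2]
    rw [if_pos hlt]
    linarith [hmineq, hmaxeq, hwrap, hlt2]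

end FlatAux

/-- Equivalent characterisations (conditions (1)–(5)) for a tuple `y ∈ ℤ^e` with
`Σ y_j = 𝔶·e + j₀`, `0 ≤ j₀ < e`, and stable sorting permutation `σ`. -/
theorem flat_conditions_iff (e : ℕ) (he : 1 ≤ e) (y : Fin e → ℤ)
    (𝔶 : ℤ) (j₀ : ℕ) (hj₀ : j₀ < e)
    (hsum : ∑ i : Fin e, y i = 𝔶 * e + j₀)
    (σ : Equiv.Perm (Fin e)) (hσ : IsStableSorting e y σ) :
    ((y (σ ⟨e - 1, by omega⟩) ≤ y (σ ⟨0, by omega⟩) +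
        (if σ ⟨e - 1, by omega⟩ < σ ⟨0, by omega⟩ then 1 else 0)) ↔
      (∀ i : Fin e, y i = 𝔶 + (if (i : ℕ) + 1 ≤ j₀ then 1 else 0))) ∧
    ((∀ i : Fin e, y i = 𝔶 + (if (i : ℕ) + 1 ≤ j₀ then 1 else 0)) ↔
      (∀ i : Fin e, (i : ℕ) + 1 ≠ (if j₀ = 0 then e else j₀) →
        y (nextIdx i) = y i + (if (i : ℕ) = e - 1 then 1 else 0))) ∧
    ((∀ i : Fin e, (i : ℕ) + 1 ≠ (if j₀ = 0 then e else j₀) →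
        y (nextIdx i) = y i + (if (i : ℕ) = e - 1 then 1 else 0)) ↔
      (∀ i : Fin e, y (nextIdx i) ≤ y i + (if (i : ℕ) = e - 1 then 1 else 0))) ∧
    ((∀ i : Fin e, y (nextIdx i) ≤ y i + (if (i : ℕ) = e - 1 then 1 else 0)) ↔
      (y (σ ⟨e - 1, by omega⟩) = y (σ ⟨0, by omega⟩) +
        (if σ ⟨e - 1, by omega⟩ < σ ⟨0, by omega⟩ then 1 else 0))) := by
  have h0e : 0 < e := he
  have h1e : e - 1 < e := Nat.sub_lt he Nat.one_pos
  have h12 := FlatAux.imp12 he h0e h1e hj₀ hsum hσ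
  have h23 := FlatAux.imp23 he hj₀ (𝔶 := 𝔶) (y := y)
  have h34 := FlatAux.imp34 he hj₀ hsum (𝔶 := 𝔶)
  have h45 := FlatAux.imp45 he h0e h1e hσ
  exact ⟨⟨fun h1 => h12 h1, fun h2 => le_of_eq (h45 (h34 (h23 h2)))⟩,
    ⟨fun h2 => h23 h2, fun h3 => h12 (le_of_eq (h45 (h34 h3)))⟩,
    ⟨fun h3 => h34 h3, fun h4 => h23 (h12 (le_of_eq (h45 h4)))⟩,
    ⟨fun h4 => h45 h4, fun h5 => h34 (h23 (h12 (le_of_eq h5)))⟩⟩
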